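/- Let p be a prime number and τ a point of the complex upper half-plane ℍ, and write q = e^{2πiτ}. Then all the infinite products below converge absolutely and ∏_{i=1}^{p−1} ∏_{j=0}^{p−1} u(i/p, j/p)(τ) = ∏_{n=1}^∞ ( (1 − qⁿ)/(1 − q^{pn}) )². -/

import Mathlib

open Complex Finset

namespace Stmt19Aux


lemma one_sub_ne_zero_of_norm_lt {x : ℂ} (h : ‖x‖ < 1) : (1 : ℂ) - x ≠ 0 := by
  intro h0
  rw [sub_eq_zero] at h0
  rw [← h0] at h
  simp at h

lemma norm_exp_lt_one {τ : ℂ} (hτ : 0 < τ.im) {a : ℚ} (ha : 0 < a) (b : ℚ) :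
    ‖Complex.exp (2 * (Real.pi : ℂ) * Complex.I * ((a : ℂ) * τ + (b : ℂ)))‖ < 1 := by
  rw [Complex.norm_exp]
  have hre : (2 * (Real.pi : ℂ) * Complex.I * ((a : ℂ) * τ + (b : ℂ))).re
      = -(2 * Real.pi * (a : ℝ) * τ.im) := by
    simp [Complex.mul_re, Complex.mul_im]
    ring
  rw [hre, ← Real.exp_zero]
  apply Real.exp_lt_exp.mpr
  have ha' : (0:ℝ) < (a : ℝ) := by exact_mod_cast ha
  have hpos : (0:ℝ) < 2 * Real.pi * (a : ℝ) * τ.im := by positivity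
  linarith

lemma hasProd_one_sub {f : ℕ → ℂ} (hf : Summable f) (hne : ∀ n, 1 - f n ≠ 0) :
    HasProd (fun n => 1 - f n) (Complex.exp (∑' n, Complex.log (1 - f n))) := by
  have h := hf.clog_one_sub.hasSum.cexp
  have e : (cexp ∘ fun n => log (1 - f n)) = fun n => 1 - f n :=
    funext fun n => Complex.exp_log (hne n)
  rwa [e] at h

lemma summable_geom {q : ℂ} (c : ℂ) (hq : ‖q‖ < 1) : Summable (fun n : ℕ => c * q ^ n) :=
  (summable_geometric_of_norm_lt_one hq).mul_left c

lemma norm_geom_lt_one {c q : ℂ} (hq : ‖q‖ < 1) (hc : ‖c‖ < 1) (n : ℕ) : ‖c * q ^ n‖ < 1 := by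
  rw [norm_mul, norm_pow]
  calc ‖c‖ * ‖q‖ ^ n ≤ ‖c‖ * 1 := by
        gcongr
        exact pow_le_one₀ (norm_nonneg _) hq.le
    _ < 1 := by rwa [mul_one]

lemma hasProd_geom {c q : ℂ} (hq : ‖q‖ < 1) (hc : ‖c‖ < 1) :
    HasProd (fun n : ℕ => 1 - c * q ^ n)
      (Complex.exp (∑' n : ℕ, Complex.log (1 - c * q ^ n))) :=
  hasProd_one_sub (summable_geom c hq)
    (fun n => one_sub_ne_zero_of_norm_lt (norm_geom_lt_one hq hc n))



lemma prod_range_sub (x : ℂ) {p : ℕ} (hp : 0 < p) {ζ : ℂ} (hζ : IsPrimitiveRoot ζ p) :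
    ∏ j ∈ Finset.range p, (x - ζ ^ j) = x ^ p - 1 := by
  have h0 := Polynomial.X_pow_sub_one_eq_prod (R := ℂ) hp hζ
  have h2 := congrArg (Polynomial.eval x) h0
  simp only [Polynomial.eval_sub, Polynomial.eval_pow, Polynomial.eval_X, Polynomial.eval_one,
    Polynomial.eval_prod, Polynomial.eval_C] at h2
  have h3 : x ^ p - 1 = ∏ μ ∈ Polynomial.nthRootsFinset p (1 : ℂ), (x - μ) := h2
  refine Eq.trans ?_ h3.symm
  refine (Finset.prod_bij (fun j _ => ζ ^ j) ?_ ?_ ?_ ?_)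
  · intro j hj
    refine (Polynomial.mem_nthRootsFinset hp 1).2 ?_
    rw [← pow_mul, mul_comm, pow_mul, hζ.pow_eq_one, one_pow]
  · intro j hj j' hj' h
    exact hζ.pow_inj (mem_range.1 hj) (mem_range.1 hj') h
  · intro μ hμ
    haveI : NeZero p := ⟨hp.ne'⟩
    obtain ⟨i, hi, hieq⟩ := hζ.eq_pow_of_pow_eq_one ((Polynomial.mem_nthRootsFinset hp 1).1 hμ)
    exact ⟨i, mem_range.2 hi, hieq⟩
  · intro j hj
    rfl

lemma prod_one_sub_mul (d : ℂ) {p : ℕ} (hp : 0 < p) {ζ : ℂ} (hζ : IsPrimitiveRoot ζ p) :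
    ∏ j ∈ Finset.range p, (1 - d * ζ ^ j) = 1 - d ^ p := by
  have hζ0 : ζ ≠ 0 := hζ.ne_zero hp.ne'
  have key : ∀ j : ℕ, (1 : ℂ) - d * ζ ^ j = (0 - ζ ^ j) * (d - (ζ⁻¹) ^ j) := by
    intro j
    have h1 : ζ ^ j * (ζ⁻¹) ^ j = 1 := by
      rw [← mul_pow, mul_inv_cancel₀ hζ0, one_pow]
    have : (0 - ζ ^ j) * (d - (ζ⁻¹) ^ j) = ζ ^ j * (ζ⁻¹) ^ j - d * ζ ^ j := by ring
    rw [this, h1]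
  calc ∏ j ∈ Finset.range p, (1 - d * ζ ^ j)
      = ∏ j ∈ Finset.range p, ((0 - ζ ^ j) * (d - (ζ⁻¹) ^ j)) :=
        Finset.prod_congr rfl fun j _ => key j
    _ = (∏ j ∈ Finset.range p, (0 - ζ ^ j)) * ∏ j ∈ Finset.range p, (d - (ζ⁻¹) ^ j) :=
        Finset.prod_mul_distrib
    _ = ((0:ℂ) ^ p - 1) * (d ^ p - 1) := by
        rw [prod_range_sub 0 hp hζ, prod_range_sub d hp hζ.inv]
    _ = 1 - d ^ p := by rw [zero_pow hp.ne']; ring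

def posEquiv (a : ℚ) (h0 : 0 < a) (h1 : a < 1) :
    ℕ ≃ {y : ℚ // (y - a).den = 1 ∧ 0 < y} where
  toFun n := ⟨a + n, by simp, by positivity⟩
  invFun y := (y.1 - a).num.toNat
  left_inv n := by simp
  right_inv y := by
    obtain ⟨y, hden, hpos⟩ := y
    have hy : ((y - a).num : ℚ) = y - a := (Rat.den_eq_one_iff _).mp hden
    have hnum : 0 ≤ (y - a).num := by
      by_contra hc
      push_neg at hc
      have h1' : (y - a).num ≤ -1 := by omega
      have h2' : ((y - a).num : ℚ) ≤ -1 := by exact_mod_cast h1'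
      rw [hy] at h2'
      linarith
    apply Subtype.ext
    have hcast : (((y - a).num.toNat : ℕ) : ℚ) = ((y - a).num : ℚ) := by
      exact_mod_cast congrArg (fun z : ℤ => (z : ℚ)) (Int.toNat_of_nonneg hnum)
    show a + (((y - a).num.toNat : ℕ) : ℚ) = y
    rw [hcast, hy]
    ring

def negEquiv (a : ℚ) (h0 : 0 < a) (h1 : a < 1) :
    ℕ ≃ {y : ℚ // (y - a).den = 1 ∧ y < 0} where
  toFun n := ⟨a - ((n + 1 : ℕ) : ℚ), by
      constructor
      · have h : a - ((n + 1 : ℕ) : ℚ) - a = -((n + 1 : ℕ) : ℚ) := by ring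
        rw [h, Rat.den_neg_eq_den]
        exact Rat.den_natCast _
      · have h : (1:ℚ) ≤ ((n + 1 : ℕ) : ℚ) := by exact_mod_cast Nat.succ_le_succ (Nat.zero_le n)
        linarith⟩
  invFun y := (a - y.1).num.toNat - 1
  left_inv n := by
    simp only
    have h : a - (a - ((n + 1 : ℕ) : ℚ)) = ((n + 1 : ℕ) : ℚ) := by ring
    rw [h, Rat.num_natCast]
    omega
  right_inv y := by
    obtain ⟨y, hden, hneg⟩ := y
    have hd : ((a - y).num : ℚ) = a - y := by
      have h : a - y = -(y - a) := by ring
      rw [h]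
      have : (-(y - a)).den = 1 := by rw [Rat.den_neg_eq_den]; exact hden
      exact (Rat.den_eq_one_iff _).mp this
    have hnum : 1 ≤ (a - y).num := by
      have hpos : (0:ℚ) < a - y := by linarith
      have := Rat.num_pos.mpr hpos
      omega
    apply Subtype.ext
    show a - (((a - y).num.toNat - 1 + 1 : ℕ) : ℚ) = y
    have h1' : ((a - y).num.toNat - 1 + 1 : ℕ) = (a - y).num.toNat := by omega
    rw [h1']
    have hcast : (((a - y).num.toNat : ℕ) : ℚ) = ((a - y).num : ℚ) := by
      exact_mod_cast congrArg (fun z : ℤ => (z : ℚ)) (Int.toNat_of_nonneg (by omega))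
    rw [hcast, hd]
    ring


end Stmt19Aux



/-- The factors of the theta-unit coming from the positive `y ≡ a (mod ℤ)`:
`y ↦ 1 − e^{2πi(yτ+b)}`. -/
noncomputable def thetaUnitPos (a b : ℚ) (τ : ℂ) :
    {y : ℚ // (y - a).den = 1 ∧ 0 < y} → ℂ :=
  fun y => 1 - Complex.exp (2 * (Real.pi : ℂ) * Complex.I * ((y.1 : ℂ) * τ + (b : ℂ)))

/-- The factors of the theta-unit coming from the negative `y ≡ a (mod ℤ)`:
`y ↦ 1 − e^{2πi(−yτ−b)}`. -/
noncomputable def thetaUnitNeg (a b : ℚ) (τ : ℂ) :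
    {y : ℚ // (y - a).den = 1 ∧ y < 0} → ℂ :=
  fun y => 1 - Complex.exp (2 * (Real.pi : ℂ) * Complex.I * (-((y.1 : ℂ) * τ) - (b : ℂ)))

/-- The theta-unit
`u(a,b)(τ) = ∏_{y ∈ a+ℤ, y>0} (1 − e^{2πi(yτ+b)}) · ∏_{y ∈ a+ℤ, y<0} (1 − e^{2πi(−yτ−b)})`. -/
noncomputable def thetaUnit (a b : ℚ) (τ : ℂ) : ℂ :=
  (∏' y, thetaUnitPos a b τ y) * (∏' y, thetaUnitNeg a b τ y)

/-- Let `p` be a prime and `τ` in the upper half-plane; write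
`q = e^{2πiτ}`. Then all the infinite products below converge and
`∏_{i=1}^{p−1} ∏_{j=0}^{p−1} u(i/p, j/p)(τ) = ∏_{n=1}^∞ ((1 − qⁿ)/(1 − q^{pn}))²`. -/
theorem stmt19 (p : ℕ) (hp : p.Prime) (τ : ℂ) (hτ : 0 < τ.im) :
    (∀ i ∈ Finset.Ico 1 p, ∀ j ∈ Finset.range p,
      Multipliable (thetaUnitPos ((i : ℚ) / (p : ℚ)) ((j : ℚ) / (p : ℚ)) τ) ∧
      Multipliable (thetaUnitNeg ((i : ℚ) / (p : ℚ)) ((j : ℚ) / (p : ℚ)) τ)) ∧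
    Multipliable (fun n : ℕ =>
      ((1 - Complex.exp (2 * (Real.pi : ℂ) * Complex.I * τ) ^ (n + 1)) /
       (1 - Complex.exp (2 * (Real.pi : ℂ) * Complex.I * τ) ^ (p * (n + 1)))) ^ 2) ∧
    ∏ i ∈ Finset.Ico 1 p, ∏ j ∈ Finset.range p,
        thetaUnit ((i : ℚ) / (p : ℚ)) ((j : ℚ) / (p : ℚ)) τ
      = ∏' n : ℕ,
        ((1 - Complex.exp (2 * (Real.pi : ℂ) * Complex.I * τ) ^ (n + 1)) /
         (1 - Complex.exp (2 * (Real.pi : ℂ) * Complex.I * τ) ^ (p * (n + 1)))) ^ 2 := by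
  classical
  open Stmt19Aux in
  have hp0 : 0 < p := hp.pos
  haveI : NeZero p := ⟨hp0.ne'⟩
  have hpQ : ((p : ℚ)) ≠ 0 := Nat.cast_ne_zero.mpr hp0.ne'
  have hpC : ((p : ℂ)) ≠ 0 := Nat.cast_ne_zero.mpr hp0.ne'
  set q : ℂ := Complex.exp (2 * (Real.pi : ℂ) * Complex.I * τ) with hqdef
  have hq : ‖q‖ < 1 := by
    rw [hqdef]
    have h := Stmt19Aux.norm_exp_lt_one hτ (a := 1) one_pos 0
    simpa using h
  have hqpow : ∀ k : ℕ, q ^ k = Complex.exp (2 * (Real.pi : ℂ) * Complex.I * ((k : ℂ) * τ)) := by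
    intro k
    rw [hqdef, ← Complex.exp_nat_mul]
    congr 1
    ring
  have hqk : ∀ k : ℕ, 1 ≤ k → ‖q ^ k‖ < 1 := by
    intro k hk
    rw [norm_pow]
    exact pow_lt_one₀ (norm_nonneg _) hq (by omega)
  have hqp : ‖q ^ p‖ < 1 := hqk p hp0
  set L : ℕ → ℂ := fun k => ∑' n : ℕ, Complex.log (1 - q ^ k * (q ^ p) ^ n) with hLdef
  set P : ℕ → ℂ := fun k => ∏' n : ℕ, (1 - q ^ k * (q ^ p) ^ n) with hPdef
  have hPprod : ∀ k, 1 ≤ k → HasProd (fun n : ℕ => 1 - q ^ k * (q ^ p) ^ n)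
      (Complex.exp (L k)) := fun k hk => Stmt19Aux.hasProd_geom hqp (hqk k hk)
  have hPval : ∀ k, 1 ≤ k → P k = Complex.exp (L k) := fun k hk => (hPprod k hk).tprod_eq
  have hPne : ∀ k, 1 ≤ k → P k ≠ 0 := fun k hk => by
    rw [hPval k hk]; exact Complex.exp_ne_zero _
  set ζ : ℂ := Complex.exp (2 * (Real.pi : ℂ) * Complex.I / p) with hζdef
  have hζ : IsPrimitiveRoot ζ p := by
    rw [hζdef]; exact Complex.isPrimitiveRoot_exp p hp0.ne'
  have hζnorm : ‖ζ‖ = 1 := Complex.norm_eq_one_of_pow_eq_one hζ.pow_eq_one hp0.ne'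
  have hζ0 : ζ ≠ 0 := hζ.ne_zero hp0.ne'
  -- main per-i computation
  have key : ∀ i : ℕ, i ∈ Finset.Ico 1 p →
      (∀ j : ℕ, j ∈ Finset.range p →
        Multipliable (thetaUnitPos ((i : ℚ) / (p : ℚ)) ((j : ℚ) / (p : ℚ)) τ) ∧
        Multipliable (thetaUnitNeg ((i : ℚ) / (p : ℚ)) ((j : ℚ) / (p : ℚ)) τ)) ∧
      ∏ j ∈ Finset.range p, thetaUnit ((i : ℚ) / (p : ℚ)) ((j : ℚ) / (p : ℚ)) τ
        = P i * P (p - i) := by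
    intro i hi
    obtain ⟨hi1, hi2⟩ := Finset.mem_Ico.mp hi
    set a : ℚ := (i : ℚ) / (p : ℚ) with hadef
    have h0 : 0 < a := by
      rw [hadef]
      apply div_pos
      · exact_mod_cast hi1
      · exact_mod_cast hp0
    have h1 : a < 1 := by
      rw [hadef, div_lt_one (by exact_mod_cast hp0)]
      exact_mod_cast hi2
    set d : ℂ := Complex.exp (2 * (Real.pi : ℂ) * Complex.I * ((a : ℂ) * τ)) with hddef
    set d' : ℂ := Complex.exp (2 * (Real.pi : ℂ) * Complex.I * (((1 - a : ℚ) : ℂ) * τ))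
      with hd'def
    have hdnorm : ‖d‖ < 1 := by
      rw [hddef]
      have := Stmt19Aux.norm_exp_lt_one hτ h0 0
      simpa using this
    have hd'norm : ‖d'‖ < 1 := by
      rw [hd'def]
      have := Stmt19Aux.norm_exp_lt_one hτ (show (0:ℚ) < 1 - a by linarith) 0
      simpa using this
    have hcomp_pos : ∀ j : ℕ,
        (thetaUnitPos a ((j : ℚ) / (p : ℚ)) τ) ∘ (Stmt19Aux.posEquiv a h0 h1)
          = fun n : ℕ => 1 - (d * ζ ^ j) * q ^ n := by
      intro j
      funext n
      simp only [Function.comp_apply, thetaUnitPos, Stmt19Aux.posEquiv, Equiv.coe_fn_mk]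
      congr 1
      rw [hddef, hζdef, hqdef, ← Complex.exp_nat_mul, ← Complex.exp_nat_mul, ← Complex.exp_add,
        ← Complex.exp_add]
      congr 1
      push_cast
      field_simp
      ring
    have hcomp_neg : ∀ j : ℕ,
        (thetaUnitNeg a ((j : ℚ) / (p : ℚ)) τ) ∘ (Stmt19Aux.negEquiv a h0 h1)
          = fun n : ℕ => 1 - (d' * (ζ⁻¹) ^ j) * q ^ n := by
      intro j
      funext n
      simp only [Function.comp_apply, thetaUnitNeg, Stmt19Aux.negEquiv, Equiv.coe_fn_mk]
      congr 1
      rw [hd'def, hζdef, hqdef, ← Complex.exp_neg, ← Complex.exp_nat_mul, ← Complex.exp_nat_mul,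
        ← Complex.exp_add, ← Complex.exp_add]
      congr 1
      push_cast
      field_simp
      ring
    have hcpos : ∀ j : ℕ, ‖d * ζ ^ j‖ < 1 := by
      intro j
      rw [norm_mul, norm_pow, hζnorm, one_pow, mul_one]
      exact hdnorm
    have hcneg : ∀ j : ℕ, ‖d' * (ζ⁻¹) ^ j‖ < 1 := by
      intro j
      rw [norm_mul, norm_pow, norm_inv, hζnorm, inv_one, one_pow, mul_one]
      exact hd'norm
    have hmulpos : ∀ j : ℕ, Multipliable (thetaUnitPos a ((j : ℚ) / (p : ℚ)) τ) := by
      intro j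
      have h := (Stmt19Aux.hasProd_geom hq (hcpos j)).multipliable
      rw [← hcomp_pos j] at h
      exact (Equiv.multipliable_iff _).mp h
    have hmulneg : ∀ j : ℕ, Multipliable (thetaUnitNeg a ((j : ℚ) / (p : ℚ)) τ) := by
      intro j
      have h := (Stmt19Aux.hasProd_geom hq (hcneg j)).multipliable
      rw [← hcomp_neg j] at h
      exact (Equiv.multipliable_iff _).mp h
    have htppos : ∀ j : ℕ, ∏' y, thetaUnitPos a ((j : ℚ) / (p : ℚ)) τ y
        = ∏' n : ℕ, (1 - (d * ζ ^ j) * q ^ n) := by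
      intro j
      rw [← Equiv.tprod_eq (Stmt19Aux.posEquiv a h0 h1) (thetaUnitPos a ((j : ℚ) / (p : ℚ)) τ)]
      exact tprod_congr fun n => (congrFun (hcomp_pos j) n)
    have htpneg : ∀ j : ℕ, ∏' y, thetaUnitNeg a ((j : ℚ) / (p : ℚ)) τ y
        = ∏' n : ℕ, (1 - (d' * (ζ⁻¹) ^ j) * q ^ n) := by
      intro j
      rw [← Equiv.tprod_eq (Stmt19Aux.negEquiv a h0 h1) (thetaUnitNeg a ((j : ℚ) / (p : ℚ)) τ)]
      exact tprod_congr fun n => (congrFun (hcomp_neg j) n)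
    refine ⟨fun j _ => ⟨hmulpos j, hmulneg j⟩, ?_⟩
    have step1 : ∏ j ∈ Finset.range p, thetaUnit a ((j : ℚ) / (p : ℚ)) τ
        = (∏ j ∈ Finset.range p, ∏' n : ℕ, (1 - (d * ζ ^ j) * q ^ n)) *
          (∏ j ∈ Finset.range p, ∏' n : ℕ, (1 - (d' * (ζ⁻¹) ^ j) * q ^ n)) := by
      rw [← Finset.prod_mul_distrib]
      refine Finset.prod_congr rfl fun j _ => ?_
      rw [thetaUnit, htppos j, htpneg j]
    have hdppow : d ^ p = q ^ i := by
      rw [hddef, ← Complex.exp_nat_mul, hqpow i]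
      congr 1
      rw [hadef]
      push_cast
      field_simp
    have hd'ppow : d' ^ p = q ^ (p - i) := by
      rw [hd'def, ← Complex.exp_nat_mul, hqpow (p - i)]
      congr 1
      rw [hadef]
      push_cast [Nat.cast_sub hi2.le]
      field_simp
    have hinner1 : ∀ n : ℕ, ∏ j ∈ Finset.range p, (1 - (d * ζ ^ j) * q ^ n)
        = 1 - q ^ i * (q ^ p) ^ n := by
      intro n
      have hre : ∀ j : ℕ, 1 - (d * ζ ^ j) * q ^ n = 1 - (d * q ^ n) * ζ ^ j := fun j => by ring
      rw [Finset.prod_congr rfl fun j _ => hre j, Stmt19Aux.prod_one_sub_mul (d * q ^ n) hp0 hζ]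
      congr 1
      rw [mul_pow, hdppow, ← pow_mul, Nat.mul_comm, pow_mul]
    have hinner2 : ∀ n : ℕ, ∏ j ∈ Finset.range p, (1 - (d' * (ζ⁻¹) ^ j) * q ^ n)
        = 1 - q ^ (p - i) * (q ^ p) ^ n := by
      intro n
      have hre : ∀ j : ℕ, 1 - (d' * (ζ⁻¹) ^ j) * q ^ n = 1 - (d' * q ^ n) * (ζ⁻¹) ^ j :=
        fun j => by ring
      rw [Finset.prod_congr rfl fun j _ => hre j,
        Stmt19Aux.prod_one_sub_mul (d' * q ^ n) hp0 hζ.inv]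
      congr 1
      rw [mul_pow, hd'ppow, ← pow_mul, Nat.mul_comm, pow_mul]
    have hswap1 : ∏ j ∈ Finset.range p, ∏' n : ℕ, (1 - (d * ζ ^ j) * q ^ n)
        = ∏' n : ℕ, ∏ j ∈ Finset.range p, (1 - (d * ζ ^ j) * q ^ n) :=
      (Multipliable.tprod_finsetProd fun j _ => (Stmt19Aux.hasProd_geom hq (hcpos j)).multipliable).symm
    have hswap2 : ∏ j ∈ Finset.range p, ∏' n : ℕ, (1 - (d' * (ζ⁻¹) ^ j) * q ^ n)
        = ∏' n : ℕ, ∏ j ∈ Finset.range p, (1 - (d' * (ζ⁻¹) ^ j) * q ^ n) :=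
      (Multipliable.tprod_finsetProd fun j _ => (Stmt19Aux.hasProd_geom hq (hcneg j)).multipliable).symm
    rw [step1, hswap1, hswap2]
    rw [tprod_congr hinner1, tprod_congr hinner2]
  -- global reindexing
  set LA : ℂ := ∑' n : ℕ, Complex.log (1 - q * q ^ n) with hLAdef
  have hAprod : HasProd (fun n : ℕ => 1 - q * q ^ n) (Complex.exp LA) :=
    Stmt19Aux.hasProd_geom hq hq
  have hAmult : Multipliable (fun n : ℕ => 1 - q * q ^ n) := hAprod.multipliable
  set e : ℕ ≃ Fin p × ℕ := (Nat.divModEquiv p).trans (Equiv.prodComm ℕ (Fin p)) with hedef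
  have hAe : ∀ z : Fin p × ℕ, (1 - q * q ^ (e.symm z)) = 1 - q ^ ((z.1 : ℕ) + 1) * (q ^ p) ^ z.2 := by
    rintro ⟨r, k⟩
    have hz : e.symm (r, k) = k * p + (r : ℕ) := rfl
    rw [hz]
    have hexp : q * q ^ (k * p + (r : ℕ)) = q ^ ((r : ℕ) + 1) * (q ^ p) ^ k := by
      rw [← pow_succ', ← pow_mul]
      rw [show k * p + (r : ℕ) + 1 = ((r : ℕ) + 1) + p * k by ring, pow_add]
    rw [hexp]
  have hAemult : Multipliable (fun z : Fin p × ℕ => 1 - q * q ^ (e.symm z)) := by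
    have := e.symm.multipliable_iff (f := fun n : ℕ => 1 - q * q ^ n)
    exact this.mpr hAmult
  have hfib : ∀ r : Fin p, Multipliable (fun k : ℕ => 1 - q * q ^ (e.symm (r, k))) := by
    intro r
    have hfe : (fun k : ℕ => 1 - q * q ^ (e.symm (r, k)))
        = fun k => 1 - q ^ ((r : ℕ) + 1) * (q ^ p) ^ k := funext fun k => hAe (r, k)
    rw [hfe]
    exact (Stmt19Aux.hasProd_geom hqp (hqk _ (Nat.le_add_left 1 _))).multipliable
  have step3 : Complex.exp LA = (∏ k ∈ Finset.Ico 1 p, P k) * P p := by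
    calc Complex.exp LA = ∏' m : ℕ, (1 - q * q ^ m) := hAprod.tprod_eq.symm
      _ = ∏' z : Fin p × ℕ, (1 - q * q ^ (e.symm z)) :=
          (Equiv.tprod_eq e.symm (fun n : ℕ => 1 - q * q ^ n)).symm
      _ = ∏' (r : Fin p), ∏' (k : ℕ), (1 - q * q ^ (e.symm (r, k))) := Multipliable.tprod_prod' hAemult hfib
      _ = ∏' (r : Fin p), P ((r : ℕ) + 1) := by
          refine tprod_congr fun r => ?_
          rw [show (fun k : ℕ => 1 - q * q ^ (e.symm (r, k)))
              = fun k => 1 - q ^ ((r : ℕ) + 1) * (q ^ p) ^ k from funext fun k => hAe (r, k)]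
      _ = ∏ r : Fin p, P ((r : ℕ) + 1) := tprod_fintype _
      _ = ∏ r ∈ Finset.range p, P (r + 1) := Fin.prod_univ_eq_prod_range (fun r => P (r + 1)) p
      _ = ∏ k ∈ Finset.Ico 1 (p + 1), P k := by
          rw [Finset.prod_Ico_eq_prod_range]
          refine Finset.prod_congr (by norm_num) fun r _ => ?_
          rw [Nat.add_comm]
      _ = (∏ k ∈ Finset.Ico 1 p, P k) * P p := Finset.prod_Ico_succ_top (by omega) _
  set S : ℂ := ∏ k ∈ Finset.Ico 1 p, P k with hSdef
  have hSval : S = Complex.exp LA / Complex.exp (L p) := by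
    rw [eq_div_iff (Complex.exp_ne_zero _), ← hPval p hp0]
    exact step3.symm
  -- RHS has-prod
  have hsA : Summable (fun n : ℕ => Complex.log (1 - q * q ^ n)) :=
    (Stmt19Aux.summable_geom q hq).clog_one_sub
  have hsB : Summable (fun n : ℕ => Complex.log (1 - q ^ p * (q ^ p) ^ n)) :=
    (Stmt19Aux.summable_geom (q ^ p) hqp).clog_one_sub
  have hAne : ∀ n : ℕ, (1 : ℂ) - q * q ^ n ≠ 0 := fun n =>
    Stmt19Aux.one_sub_ne_zero_of_norm_lt (Stmt19Aux.norm_geom_lt_one hq hq n)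
  have hBne : ∀ n : ℕ, (1 : ℂ) - q ^ p * (q ^ p) ^ n ≠ 0 := fun n =>
    Stmt19Aux.one_sub_ne_zero_of_norm_lt (Stmt19Aux.norm_geom_lt_one hqp hqp n)
  have hg : Summable (fun n : ℕ => 2 * Complex.log (1 - q * q ^ n)
      - 2 * Complex.log (1 - q ^ p * (q ^ p) ^ n)) := (hsA.mul_left 2).sub (hsB.mul_left 2)
  have hR : HasProd (fun n : ℕ => ((1 - q * q ^ n) / (1 - q ^ p * (q ^ p) ^ n)) ^ 2)
      (Complex.exp (2 * LA - 2 * L p)) := by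
    have h := hg.hasSum.cexp
    have he : (Complex.exp ∘ fun n : ℕ => 2 * Complex.log (1 - q * q ^ n)
        - 2 * Complex.log (1 - q ^ p * (q ^ p) ^ n))
        = fun n => ((1 - q * q ^ n) / (1 - q ^ p * (q ^ p) ^ n)) ^ 2 := by
      funext n
      simp only [Function.comp_apply]
      rw [Complex.exp_sub,
        show (2 : ℂ) * Complex.log (1 - q * q ^ n)
          = ((2 : ℕ) : ℂ) * Complex.log (1 - q * q ^ n) by norm_num,
        show (2 : ℂ) * Complex.log (1 - q ^ p * (q ^ p) ^ n)
          = ((2 : ℕ) : ℂ) * Complex.log (1 - q ^ p * (q ^ p) ^ n) by norm_num,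
        Complex.exp_nat_mul, Complex.exp_nat_mul, Complex.exp_log (hAne n),
        Complex.exp_log (hBne n), div_pow]
    have hsumval : ∑' n : ℕ, (2 * Complex.log (1 - q * q ^ n)
        - 2 * Complex.log (1 - q ^ p * (q ^ p) ^ n)) = 2 * LA - 2 * L p := by
      rw [Summable.tsum_sub (hsA.mul_left 2) (hsB.mul_left 2), tsum_mul_left, tsum_mul_left]
    rw [he, hsumval] at h
    exact h
  have hfunmatch : (fun n : ℕ => ((1 - q ^ (n + 1)) / (1 - q ^ (p * (n + 1)))) ^ 2)
      = fun n : ℕ => ((1 - q * q ^ n) / (1 - q ^ p * (q ^ p) ^ n)) ^ 2 := by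
    funext n
    have e1 : q ^ (n + 1) = q * q ^ n := by rw [pow_succ]; ring
    have e2 : q ^ (p * (n + 1)) = q ^ p * (q ^ p) ^ n := by
      rw [show p * (n + 1) = p + p * n by ring, pow_add, pow_mul]
    rw [e1, e2]
  refine ⟨fun i hi => (key i hi).1, ?_, ?_⟩
  · rw [hfunmatch]
    exact hR.multipliable
  · rw [hfunmatch, hR.tprod_eq]
    calc ∏ i ∈ Finset.Ico 1 p, ∏ j ∈ Finset.range p,
          thetaUnit ((i : ℚ) / (p : ℚ)) ((j : ℚ) / (p : ℚ)) τ
        = ∏ i ∈ Finset.Ico 1 p, (P i * P (p - i)) :=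
          Finset.prod_congr rfl fun i hi => (key i hi).2
      _ = (∏ i ∈ Finset.Ico 1 p, P i) * (∏ i ∈ Finset.Ico 1 p, P (p - i)) :=
          Finset.prod_mul_distrib
      _ = S * S := by
          have hreflect : ∏ i ∈ Finset.Ico 1 p, P (p - i) = ∏ i ∈ Finset.Ico 1 p, P i := by
            refine Finset.prod_nbij' (fun i => p - i) (fun i => p - i) ?_ ?_ ?_ ?_ ?_ <;>
              intro i hii <;>
              obtain ⟨a1, a2⟩ := Finset.mem_Ico.mp hii
            · exact Finset.mem_Ico.mpr ⟨by omega, by omega⟩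
            · exact Finset.mem_Ico.mpr ⟨by omega, by omega⟩
            · omega
            · omega
            · rfl
          rw [hreflect, hSdef]
      _ = Complex.exp (2 * LA - 2 * L p) := by
          rw [hSval, Complex.exp_sub,
            show (2 : ℂ) * LA = ((2 : ℕ) : ℂ) * LA by norm_num,
            show (2 : ℂ) * L p = ((2 : ℕ) : ℂ) * L p by norm_num,
            Complex.exp_nat_mul, Complex.exp_nat_mul]
          rw [div_mul_div_comm]
          ring
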